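/- Every one-ended finitely generated group is wide (i.e., not narrow). -/

import Mathlib

/-- A finite symmetric generating set for a group, inducing the word metric. -/
structure GenSet (G : Type*) [Group G] where
  carrier : Finset G
  symm : ∀ a ∈ carrier, a⁻¹ ∈ carrier
  gen : Subgroup.closure (carrier : Set G) = ⊤

namespace GenSet

variable {G : Type*} [Group G] (S : GenSet G)

/-- Adjacency in the Cayley graph. -/
def adj (g h : G) : Prop := g⁻¹ * h ∈ S.carrier

/-- The word metric: the least length of a word in the generators carrying `g` to `h`. -/
noncomputable def dist (g h : G) : ℕ :=
  sInf {n | ∃ w : List G, (∀ a ∈ w, a ∈ S.carrier) ∧ w.length = n ∧ g * w.prod = h}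

/-- The ball of radius `r` about `c` in the word metric. -/
def ball (c : G) (r : ℕ) : Set G := {g | S.dist c g ≤ r}

/-- `C` separates `A` from `B` if every path (finite sequence of points, each at distance
one from its successor) from `A` to `B` meets `C`. -/
def Separates (C A B : Set G) : Prop :=
  ∀ (l : List G) (hl : l ≠ []), l.Chain' S.adj → l.head hl ∈ A → l.getLast hl ∈ B →
    ∃ x ∈ l, x ∈ C

/-- A group is narrow if there is an integer `i` such that every ball is separated from all
but finitely many balls of the same radius by a set of size at most `i`. -/
def Narrow : Prop :=
  ∃ i : ℕ, ∀ (r : ℕ) (c : G),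
    {c' : G | ¬ ∃ C : Finset G, C.card ≤ i ∧
      S.Separates (↑C) (S.ball c r) (S.ball c' r)}.Finite

/-- Two points are connected within `A` if some path inside `A` joins them. -/
def ConnIn (A : Set G) (g h : G) : Prop :=
  ∃ (l : List G) (hl : l ≠ []), l.Chain' S.adj ∧ (∀ x ∈ l, x ∈ A) ∧
    l.head hl = g ∧ l.getLast hl = h

/-- The connected component of `g` inside the set `A`. -/
def comp (A : Set G) (g : G) : Set G := {h | S.ConnIn A g h}

/-- A group is one-ended if for every radius `r` the complement of the ball of radius `r`
about the identity has exactly one infinite connected component. -/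
def OneEnded : Prop :=
  ∀ r : ℕ, ∃ g ∈ (S.ball 1 r)ᶜ, (S.comp (S.ball 1 r)ᶜ g).Infinite ∧
    ∀ h ∈ (S.ball 1 r)ᶜ, (S.comp (S.ball 1 r)ᶜ h).Infinite →
      S.comp (S.ball 1 r)ᶜ h = S.comp (S.ball 1 r)ᶜ g

end GenSet

/-- A group is virtually free if it has a free subgroup of finite index. -/
def VirtuallyFree (G : Type*) [Group G] : Prop :=
  ∃ H : Subgroup G, H.FiniteIndex ∧ IsFreeGroup H

/-- A group is virtually cyclic if it has a cyclic subgroup of finite index. -/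
def VirtuallyCyclic (G : Type*) [Group G] : Prop :=
  ∃ H : Subgroup G, H.FiniteIndex ∧ IsCyclic H

/-- A (finitely generable) group is one-ended if it is so with respect to some
(equivalently, any) word metric. -/
def OneEndedGroup (G : Type*) [Group G] : Prop := ∃ S : GenSet G, S.OneEnded

namespace GenSet

variable {G : Type*} [Group G] (S : GenSet G)

/- ################ basic word/dist lemmas ################ -/

lemma adj_symm {g h : G} (h1 : S.adj g h) : S.adj h g := by
  have := S.symm _ h1
  simpa [adj, mul_inv_rev] using this

lemma adj_mul_left (a : G) {g h : G} (h1 : S.adj g h) : S.adj (a * g) (a * h) := by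
  simpa [adj, mul_assoc] using h1

lemma adj_mul_left_iff (a : G) {g h : G} : S.adj (a * g) (a * h) ↔ S.adj g h := by
  constructor
  · intro h1; simpa using S.adj_mul_left a⁻¹ h1
  · exact S.adj_mul_left a

lemma exists_word (g h : G) : ∃ w : List G, (∀ a ∈ w, a ∈ S.carrier) ∧ g * w.prod = h := by
  suffices H : ∀ x : G, ∃ w : List G, (∀ a ∈ w, a ∈ S.carrier) ∧ w.prod = x by
    obtain ⟨w, hw, hp⟩ := H (g⁻¹ * h)
    exact ⟨w, hw, by rw [hp]; group⟩
  intro x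
  have hx : x ∈ Subgroup.closure (S.carrier : Set G) := by rw [S.gen]; trivial
  induction hx using Subgroup.closure_induction with
  | mem y hy => exact ⟨[y], by simpa using hy, by simp⟩
  | one => exact ⟨[], by simp, by simp⟩
  | mul y z _ _ hy hz =>
      obtain ⟨w1, hw1, hp1⟩ := hy
      obtain ⟨w2, hw2, hp2⟩ := hz
      refine ⟨w1 ++ w2, ?_, by simp [hp1, hp2]⟩
      intro a ha
      rcases List.mem_append.1 ha with h | h
      exacts [hw1 a h, hw2 a h]
  | inv y _ hy =>
      obtain ⟨w, hw, hp⟩ := hy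
      refine ⟨(w.map (·⁻¹)).reverse, ?_, ?_⟩
      · intro a ha
        simp only [List.mem_reverse, List.mem_map] at ha
        obtain ⟨b, hb, rfl⟩ := ha
        exact S.symm b (hw b hb)
      · rw [(List.prod_inv_reverse w).symm, hp]
  
lemma dist_spec (g h : G) : ∃ w : List G, (∀ a ∈ w, a ∈ S.carrier) ∧
    w.length = S.dist g h ∧ g * w.prod = h := by
  have hne : {n | ∃ w : List G, (∀ a ∈ w, a ∈ S.carrier) ∧ w.length = n ∧ g * w.prod = h}.Nonempty := by
    obtain ⟨w, hw, hp⟩ := S.exists_word g h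
    exact ⟨w.length, w, hw, rfl, hp⟩
  exact Nat.sInf_mem hne

lemma dist_le {g h : G} {w : List G} (hw : ∀ a ∈ w, a ∈ S.carrier) (hp : g * w.prod = h) :
    S.dist g h ≤ w.length :=
  Nat.sInf_le ⟨w, hw, rfl, hp⟩

lemma dist_self (g : G) : S.dist g g = 0 :=
  Nat.le_zero.1 (S.dist_le (w := []) (by simp) (by simp))

lemma eq_of_dist_eq_zero {g h : G} (hd : S.dist g h = 0) : g = h := by
  obtain ⟨w, hw, hl, hp⟩ := S.dist_spec g h
  rw [hd, List.length_eq_zero_iff] at hl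
  simpa [hl] using hp

lemma dist_triangle (g k h : G) : S.dist g h ≤ S.dist g k + S.dist k h := by
  obtain ⟨w1, hw1, hl1, hp1⟩ := S.dist_spec g k
  obtain ⟨w2, hw2, hl2, hp2⟩ := S.dist_spec k h
  have := S.dist_le (w := w1 ++ w2) (g := g) (h := h)
    (by intro a ha; rcases List.mem_append.1 ha with h' | h'; exacts [hw1 a h', hw2 a h'])
    (by simp [← mul_assoc, hp1, hp2])
  simpa [hl1, hl2] using this

lemma dist_mul_left (a g h : G) : S.dist (a * g) (a * h) = S.dist g h := by
  unfold dist
  congr 1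
  ext n
  constructor <;> (rintro ⟨w, hw, hl, hp⟩; refine ⟨w, hw, hl, ?_⟩)
  · have := congrArg (a⁻¹ * ·) hp; simpa [mul_assoc] using this
  · rw [mul_assoc, hp]

lemma dist_comm (g h : G) : S.dist g h = S.dist h g := by
  have key : ∀ x y : G, S.dist x y ≤ S.dist y x := by
    intro x y
    obtain ⟨w, hw, hl, hp⟩ := S.dist_spec y x
    have hmem : ∀ a ∈ (w.map (·⁻¹)).reverse, a ∈ S.carrier := by
      intro a ha
      simp only [List.mem_reverse, List.mem_map] at ha
      obtain ⟨b, hb, rfl⟩ := ha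
      exact S.symm b (hw b hb)
    have hprod : x * ((w.map (·⁻¹)).reverse).prod = y := by
      rw [← List.prod_inv_reverse]
      have : w.prod = y⁻¹ * x := by rw [← hp]; group
      rw [this]; group
    have := S.dist_le hmem hprod
    simpa [hl] using this
  exact le_antisymm (key g h) (key h g)

lemma dist_le_one_of_adj {g h : G} (h1 : S.adj g h) : S.dist g h ≤ 1 := by
  have := S.dist_le (g := g) (h := h) (w := [g⁻¹ * h]) (by simpa [adj] using h1)
    (by simp [mul_inv_cancel_left])
  simpa using this

lemma mem_ball_iff {c g : G} {r : ℕ} : g ∈ S.ball c r ↔ S.dist c g ≤ r := Iff.rfl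

lemma ball_finite (c : G) (r : ℕ) : (S.ball c r).Finite := by
  induction r with
  | zero =>
      refine Set.Finite.subset (Set.finite_singleton c) ?_
      intro g hg
      have : S.dist c g = 0 := Nat.le_zero.1 hg
      simp [S.eq_of_dist_eq_zero this]
  | succ n ih =>
      have hsub : S.ball c (n+1) ⊆ S.ball c n ∪
          ⋃ a ∈ S.carrier, (fun b => b * a) '' S.ball c n := by
        intro g hg
        obtain ⟨w, hw, hl, hp⟩ := S.dist_spec c g
        rcases Nat.lt_or_ge (S.dist c g) (n+1) with h' | h'
        · exact Or.inl (Nat.lt_succ_iff.1 h')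
        · have hlen : w.length = n + 1 := le_antisymm (hl ▸ hg) (hl ▸ h')
          have hwne : w ≠ [] := by intro h0; simp [h0] at hlen
          right
          refine Set.mem_biUnion (hw _ (List.getLast_mem hwne)) ?_
          refine ⟨c * w.dropLast.prod, ?_, ?_⟩
          · have := S.dist_le (w := w.dropLast) (g := c) (h := c * w.dropLast.prod)
              (fun a ha => hw a (List.dropLast_subset w ha)) rfl
            have hlen' : w.dropLast.length = n := by
              simp [List.length_dropLast, hlen]
            exact le_trans this (le_of_eq hlen')
          · have : w.dropLast.prod * w.getLast hwne = w.prod := by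
              conv_rhs => rw [← List.dropLast_append_getLast hwne]
              simp
            simp only [mul_assoc, this, hp]
      refine Set.Finite.subset ?_ hsub
      exact ih.union (Set.Finite.biUnion S.carrier.finite_toSet (fun a _ => ih.image _))

/- ################ connectivity ################ -/

/-- One step of a path staying inside `A`. -/
def step (A : Set G) (x y : G) : Prop := S.adj x y ∧ x ∈ A ∧ y ∈ A

lemma step_symm {A : Set G} {x y : G} (h : S.step A x y) : S.step A y x :=
  ⟨S.adj_symm h.1, h.2.2, h.2.1⟩

open Relation in
lemma connIn_iff {A : Set G} {g h : G} :
    S.ConnIn A g h ↔ g ∈ A ∧ h ∈ A ∧ ReflTransGen (S.step A) g h := by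
  constructor
  · rintro ⟨l, hl, hchain, hmem, hhead, hlast⟩
    subst hhead hlast
    induction l with
    | nil => simp at hl
    | cons a t ih =>
      rcases t with _ | ⟨b, t'⟩
      · refine ⟨by simp [hmem], by simp [hmem], ?_⟩
        simp only [List.getLast_singleton, List.head_cons]
        exact ReflTransGen.refl
      · have hchain' := (List.isChain_cons_cons.1 hchain)
        have hmem' : ∀ x ∈ b :: t', x ∈ A := fun x hx => hmem x (List.mem_cons_of_mem a hx)
        obtain ⟨hb, hlast, hrtg⟩ := ih (by simp) hchain'.2 hmem'
        have hgl : (a :: b :: t').getLast (by simp) = (b :: t').getLast (by simp) :=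
          List.getLast_cons (by simp)
        refine ⟨hmem a (by simp), ?_, ?_⟩
        · rw [List.head_cons] at *
          rw [hgl]; exact hlast
        · rw [hgl, List.head_cons]
          refine ReflTransGen.head ⟨hchain'.1, hmem a (by simp), by simpa using hb⟩ ?_
          simpa using hrtg
  · rintro ⟨hg, hh, hrtg⟩
    have key : ∀ x, ReflTransGen (S.step A) x h → x ∈ A → S.ConnIn A x h := by
      intro x hx
      induction hx using ReflTransGen.head_induction_on with
      | refl => exact fun hxA => ⟨[h], by simp, List.isChain_singleton _, by simpa using hxA, by simp, by simp⟩
      | @head p q hstep htail ih =>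
        intro _
        obtain ⟨l, hl, hchain, hmem, hhead, hlast⟩ := ih hstep.2.2
        refine ⟨p :: l, by simp, ?_, ?_, by simp, by rwa [List.getLast_cons hl]⟩
        · refine List.isChain_cons.2 ?_
          refine ⟨?_, hchain⟩
          intro z hz
          rw [List.head?_eq_head hl] at hz
          simp only [Option.mem_some_iff] at hz
          subst hz
          rw [hhead]
          exact hstep.1
        · intro z hz
          rcases List.mem_cons.1 hz with rfl | hz
          exacts [hstep.2.1, hmem z hz]
    exact key g hrtg hg

open Relation

lemma mem_comp_self {A : Set G} {g : G} (hg : g ∈ A) : g ∈ S.comp A g :=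
  S.connIn_iff.2 ⟨hg, hg, ReflTransGen.refl⟩

lemma comp_subset {A : Set G} {g : G} : S.comp A g ⊆ A := by
  intro h hh
  exact (S.connIn_iff.1 hh).2.1

lemma connIn_symm {A : Set G} {g h : G} (h1 : S.ConnIn A g h) : S.ConnIn A h g := by
  rw [connIn_iff] at *
  obtain ⟨hg, hh, hr⟩ := h1
  exact ⟨hh, hg, ((@ReflTransGen.stdSymm _ _ ⟨fun _ _ => S.step_symm⟩).symm _ _ hr)⟩

lemma connIn_trans {A : Set G} {g k h : G} (h1 : S.ConnIn A g k) (h2 : S.ConnIn A k h) :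
    S.ConnIn A g h := by
  rw [connIn_iff] at *
  exact ⟨h1.1, h2.2.1, h1.2.2.trans h2.2.2⟩

lemma comp_eq_of_mem {A : Set G} {g h : G} (hh : h ∈ S.comp A g) :
    S.comp A g = S.comp A h := by
  ext z
  constructor
  · intro hz; exact S.connIn_trans (S.connIn_symm hh) hz
  · intro hz; exact S.connIn_trans hh hz

lemma comp_mono {A B : Set G} (hAB : A ⊆ B) (g : G) : S.comp A g ⊆ S.comp B g := by
  intro h hh
  rw [comp, Set.mem_setOf_eq, connIn_iff] at *
  exact ⟨hAB hh.1, hAB hh.2.1, ReflTransGen.mono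
    (fun x y hxy => ⟨hxy.1, hAB hxy.2.1, hAB hxy.2.2⟩) _ _ hh.2.2⟩

lemma connIn_of_adj {A : Set G} {g h : G} (ha : S.adj g h) (hg : g ∈ A) (hh : h ∈ A) :
    S.ConnIn A g h :=
  S.connIn_iff.2 ⟨hg, hh, ReflTransGen.single ⟨ha, hg, hh⟩⟩

lemma mem_comp_of_adj {A : Set G} {g h k : G} (hk : k ∈ S.comp A g) (ha : S.adj k h)
    (hh : h ∈ A) : h ∈ S.comp A g :=
  S.connIn_trans hk (S.connIn_of_adj ha (S.comp_subset hk) hh)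

/-- Full connectivity of the Cayley graph. -/
lemma reachable (g h : G) : ReflTransGen S.adj g h := by
  obtain ⟨w, hw, hp⟩ := S.exists_word g h
  induction w generalizing g with
  | nil =>
      simp only [List.prod_nil, mul_one] at hp
      subst hp; exact ReflTransGen.refl
  | cons a t ih =>
      have ha : S.adj g (g * a) := by simpa [adj] using hw a (by simp)
      refine ReflTransGen.head ha (ih (g := g * a) (fun x hx => hw x (by simp [hx])) ?_)
      rw [mul_assoc]
      simpa using hp

/- ################ translation ################ -/

lemma connIn_translate {A : Set G} {g h : G} (a : G) (h1 : S.ConnIn A g h) :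
    S.ConnIn ((a * ·) '' A) (a * g) (a * h) := by
  rw [connIn_iff] at *
  obtain ⟨hg, hh, hr⟩ := h1
  refine ⟨⟨g, hg, rfl⟩, ⟨h, hh, rfl⟩, ?_⟩
  exact ReflTransGen.lift (a * ·) (fun x y hxy =>
    ⟨S.adj_mul_left a hxy.1, ⟨x, hxy.2.1, rfl⟩, ⟨y, hxy.2.2, rfl⟩⟩) _ _ hr

lemma comp_translate (A : Set G) (g a : G) :
    S.comp ((a * ·) '' A) (a * g) = (a * ·) '' S.comp A g := by
  ext z
  constructor
  · intro hz
    have h2 : S.ConnIn ((a⁻¹ * ·) '' ((a * ·) '' A)) (a⁻¹ * (a * g)) (a⁻¹ * z) :=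
      S.connIn_translate a⁻¹ hz
    have himg : ((a⁻¹ * ·) '' ((a * ·) '' A)) = A := by
      ext x; constructor
      · rintro ⟨y, ⟨u, hu, rfl⟩, rfl⟩; simpa using hu
      · intro hx; exact ⟨a * x, ⟨x, hx, rfl⟩, by simp⟩
    rw [himg] at h2
    refine ⟨a⁻¹ * z, ?_, by simp⟩
    exact (by simpa using h2 : S.ConnIn A g (a⁻¹ * z))
  · rintro ⟨y, hy, rfl⟩
    exact S.connIn_translate a hy

lemma ball_translate (c : G) (r : ℕ) (a : G) :
    (a * ·) '' S.ball c r = S.ball (a * c) r := by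
  ext x
  constructor
  · rintro ⟨y, hy, rfl⟩
    simpa [ball, S.dist_mul_left] using hy
  · intro hx
    refine ⟨a⁻¹ * x, ?_, by simp⟩
    have h3 : S.dist c (a⁻¹ * x) = S.dist (a * c) (a * (a⁻¹ * x)) := (S.dist_mul_left a c _).symm
    have h4 : a * (a⁻¹ * x) = x := by simp
    rw [h4] at h3
    show S.dist c (a⁻¹ * x) ≤ r
    rw [h3]
    exact hx

/- ################ boundary and unique infinite component ################ -/

/-- From a point outside a set `W` (with some point of `W` reachable), its component in `Wᶜ`
contains a point adjacent to `W`. -/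
lemma exists_boundary {W : Set G} {w t : G} (hw : w ∉ W) (ht : t ∈ W) :
    ∃ v, v ∈ S.comp Wᶜ w ∧ ∃ t', t' ∈ W ∧ S.adj v t' := by
  have key : ∀ x, ReflTransGen S.adj x t → x ∉ W →
      ∃ v, v ∈ S.comp Wᶜ x ∧ ∃ t', t' ∈ W ∧ S.adj v t' := by
    intro x hx
    induction hx using ReflTransGen.head_induction_on with
    | refl => exact fun hxW => absurd ht hxW
    | @head p q hstep htail ih =>
      intro hpW
      by_cases hqW : q ∈ W
      · exact ⟨p, S.mem_comp_self hpW, q, hqW, hstep⟩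
      · obtain ⟨v, hv, t', ht', hadj⟩ := ih hqW
        refine ⟨v, ?_, t', ht', hadj⟩
        exact S.connIn_trans (S.connIn_of_adj hstep hpW hqW) hv
  exact key w (S.reachable w t) hw

lemma comp_infinite_translate {A : Set G} {g : G} (a : G) (h : (S.comp A g).Infinite) :
    (S.comp ((a * ·) '' A) (a * g)).Infinite := by
  rw [S.comp_translate]
  exact h.image (Set.injOn_of_injective (mul_right_injective a))

/-- There is at most one infinite component in the complement of a finite set. -/
lemma unique_infinite_comp (hone : S.OneEnded) {T : Set G} (hT : T.Finite) {x y : G}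
    (hx : (S.comp Tᶜ x).Infinite) (hy : (S.comp Tᶜ y).Infinite) :
    S.comp Tᶜ x = S.comp Tᶜ y := by
  classical
  -- radius containing T
  obtain ⟨ρ, hρ⟩ : ∃ ρ, T ⊆ S.ball 1 ρ := by
    refine ⟨hT.toFinset.sup (S.dist 1), fun v hv => ?_⟩
    exact Finset.le_sup (f := S.dist 1) (hT.mem_toFinset.2 hv)
  have hball : (S.ball 1 ρ)ᶜ ⊆ Tᶜ := Set.compl_subset_compl.2 hρ
  obtain ⟨g₀, hg₀, hg₀inf, huniq⟩ := hone ρ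
  -- every infinite comp of Tᶜ meets comp of g₀ in ballᶜ
  have main : ∀ z : G, (S.comp Tᶜ z).Infinite →
      ∃ w, w ∈ S.comp Tᶜ z ∧ w ∈ S.comp (S.ball 1 ρ)ᶜ g₀ := by
    intro z hz
    set X := S.comp Tᶜ z with hX
    have hXb : (X \ S.ball 1 ρ).Infinite := hz.diff (S.ball_finite 1 ρ)
    -- cover by components indexed by points of ball 1 (ρ+1)
    have hcov : X \ S.ball 1 ρ ⊆ ⋃ v ∈ S.ball 1 (ρ+1), S.comp (S.ball 1 ρ)ᶜ v := by
      intro w hw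
      obtain ⟨v, hv, t', ht', hadj⟩ := S.exists_boundary (W := S.ball 1 ρ) hw.2
        (S.mem_ball_iff.2 (by rw [S.dist_self]; exact Nat.zero_le ρ))
      have hvball : v ∈ S.ball 1 (ρ+1) := by
        have h1 : S.dist 1 v ≤ S.dist 1 t' + S.dist t' v := S.dist_triangle 1 t' v
        have h2 : S.dist t' v ≤ 1 := by
          rw [S.dist_comm]; exact S.dist_le_one_of_adj hadj
        refine le_trans h1 ?_
        have h3 : S.dist 1 t' ≤ ρ := ht'
        omega
      have hwv : w ∈ S.comp (S.ball 1 ρ)ᶜ v := by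
        rw [← S.comp_eq_of_mem hv]
        exact S.mem_comp_self hw.2
      exact Set.mem_biUnion hvball hwv
    have hpiece : ∃ v ∈ S.ball 1 (ρ+1),
        (S.comp (S.ball 1 ρ)ᶜ v ∩ (X \ S.ball 1 ρ)).Infinite := by
      by_contra hcon
      push_neg at hcon
      have hfin : (X \ S.ball 1 ρ).Finite := by
        have hbig : Set.Finite (⋃ v ∈ S.ball 1 (ρ+1),
            (S.comp (S.ball 1 ρ)ᶜ v ∩ (X \ S.ball 1 ρ))) :=
          Set.Finite.biUnion (S.ball_finite 1 (ρ+1)) (fun v hv => (hcon v hv))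
        refine Set.Finite.subset hbig (fun w hw => ?_)
        have := hcov hw
        simp only [Set.mem_iUnion] at this ⊢
        obtain ⟨v, hv1, hv2⟩ := this
        exact ⟨v, hv1, hv2, hw⟩
      exact hXb hfin
    obtain ⟨v, hvball, hvinf⟩ := hpiece
    obtain ⟨w, hwv, hwX⟩ := hvinf.nonempty
    have hcompinf : (S.comp (S.ball 1 ρ)ᶜ w).Infinite := by
      rw [← S.comp_eq_of_mem hwv]
      exact hvinf.mono Set.inter_subset_left
    have := huniq w hwX.2 hcompinf
    refine ⟨w, hwX.1, ?_⟩
    rw [← this]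
    exact S.mem_comp_self hwX.2
  obtain ⟨w₁, hw₁X, hw₁K⟩ := main x hx
  obtain ⟨w₂, hw₂X, hw₂K⟩ := main y hy
  have hconn : S.ConnIn Tᶜ w₁ w₂ := by
    have h12 : S.ConnIn (S.ball 1 ρ)ᶜ w₁ w₂ := S.connIn_trans (S.connIn_symm hw₁K) hw₂K
    exact S.connIn_iff.2 (by
      have := S.connIn_iff.1 h12
      exact ⟨hball this.1, hball this.2.1, ReflTransGen.mono
        (fun a b hab => ⟨hab.1, hball hab.2.1, hball hab.2.2⟩) _ _ this.2.2⟩)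
  calc S.comp Tᶜ x = S.comp Tᶜ w₁ := S.comp_eq_of_mem hw₁X
    _ = S.comp Tᶜ w₂ := by rw [S.comp_eq_of_mem (S.connIn_iff.2 (S.connIn_iff.1 hconn))]
    _ = S.comp Tᶜ y := (S.comp_eq_of_mem hw₂X).symm

/- ################ part 1 : extraction of small cuts at every scale ################ -/

lemma infinite_of_unbounded {A : Set G} (h : ∀ L : ℕ, ∃ a ∈ A, L ≤ S.dist 1 a) :
    A.Infinite := by
  by_contra hcon
  rw [Set.not_infinite] at hcon
  rename' hcon => hfin
  obtain ⟨a, haA, ha⟩ := h ((hfin.toFinset.sup (S.dist 1)) + 1)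
  have : S.dist 1 a ≤ hfin.toFinset.sup (S.dist 1) :=
    Finset.le_sup (f := S.dist 1) (hfin.mem_toFinset.2 haA)
  omega

lemma key1 (hone : S.OneEnded) {i : ℕ}
    (hnar : ∀ (r : ℕ) (c : G), {c' : G | ¬ ∃ C : Finset G, C.card ≤ i ∧
      S.Separates (↑C) (S.ball c r) (S.ball c' r)}.Finite) (r : ℕ) :
    ∃ (C : Set G) (q u a : G), C.Finite ∧ C.ncard ≤ i ∧
      S.adj 1 q ∧ S.adj 1 u ∧ (S.comp Cᶜ q).Finite ∧ (S.comp Cᶜ u).Infinite ∧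
      a ∈ S.comp Cᶜ q ∧ r ≤ S.dist 1 a := by
  classical
  set R := r + 1 with hR
  -- the group is infinite
  obtain ⟨gw, hgw, hinfw, _⟩ := hone 0
  have hGinf : (Set.univ : Set G).Infinite := hinfw.mono (Set.subset_univ _)
  -- find a good center c'
  obtain ⟨c', hc'⟩ : ∃ c', c' ∉ {c' : G | ¬ ∃ C : Finset G, C.card ≤ i ∧
      S.Separates (↑C) (S.ball 1 R) (S.ball c' R)} := by
    by_contra hcon
    push_neg at hcon
    refine hGinf (Set.Finite.subset (hnar R 1) (fun y _ => ?_))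
    simp only [Set.mem_setOf_eq, not_exists, not_and]
    exact fun C hC => hcon y C hC
  simp only [Set.mem_setOf_eq, not_not] at hc'
  obtain ⟨C₀, hC₀card, hsep⟩ := hc'
  set T : Set G := (↑C₀ : Set G) with hT
  have hTfin : T.Finite := C₀.finite_toSet
  -- canonical infinite component of Tᶜ
  obtain ⟨ρ, hρ⟩ : ∃ ρ, T ⊆ S.ball 1 ρ := by
    refine ⟨hTfin.toFinset.sup (S.dist 1), fun v hv => ?_⟩
    exact Finset.le_sup (f := S.dist 1) (hTfin.mem_toFinset.2 hv)
  have hball : (S.ball 1 ρ)ᶜ ⊆ Tᶜ := Set.compl_subset_compl.2 hρ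
  obtain ⟨g₀, hg₀, hg₀inf, _⟩ := hone ρ
  set K := S.comp Tᶜ g₀ with hK
  have hg₀T : g₀ ∈ Tᶜ := hball hg₀
  have hKinf : K.Infinite := by
    refine Set.Infinite.mono ?_ (hg₀inf.mono (S.comp_mono hball g₀))
    exact fun x hx => hx
  -- dichotomy
  have hdi : (∀ a ∈ S.ball 1 R, a ∉ K) ∨ (∀ b ∈ S.ball c' R, b ∉ K) := by
    by_contra hcon
    push_neg at hcon
    obtain ⟨⟨a, haB, haK⟩, ⟨b, hbB, hbK⟩⟩ := hcon
    have hab : S.ConnIn Tᶜ a b := S.connIn_trans (S.connIn_symm haK) hbK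
    obtain ⟨l, hl, hchain, hmem, hhead, hlast⟩ := hab
    obtain ⟨x, hxl, hxT⟩ := hsep l hl hchain (by rw [hhead]; exact haB) (by rw [hlast]; exact hbB)
    exact (hmem x hxl) hxT
  -- it suffices to handle one cut-off center z
  have hmain : ∀ z : G, (∀ a ∈ S.ball z R, a ∉ K) →
      ∃ (C : Set G) (q u a : G), C.Finite ∧ C.ncard ≤ i ∧
        S.adj 1 q ∧ S.adj 1 u ∧ (S.comp Cᶜ q).Finite ∧ (S.comp Cᶜ u).Infinite ∧
        a ∈ S.comp Cᶜ q ∧ r ≤ S.dist 1 a := by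
    intro z hz
    have hzK : z ∉ K := hz z (S.mem_ball_iff.2 (by rw [S.dist_self]; exact Nat.zero_le R))
    -- refined cut : points of T adjacent to K
    set T2 : Set G := {v | v ∈ T ∧ ∃ k ∈ K, S.adj v k} with hT2
    have hT2sub : T2 ⊆ T := fun v hv => hv.1
    have hT2fin : T2.Finite := hTfin.subset hT2sub
    have hT2card : T2.ncard ≤ i := by
      have h1 : T2.ncard ≤ T.ncard := Set.ncard_le_ncard hT2sub hTfin
      have h2 : T.ncard = C₀.card := by rw [hT]; exact Set.ncard_coe_finset C₀
      omega
    have hsub2 : Tᶜ ⊆ T2ᶜ := Set.compl_subset_compl.2 hT2sub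
    -- K is still the component of g₀ in T2ᶜ
    have hKT2 : S.comp T2ᶜ g₀ = K := by
      refine le_antisymm ?_ (S.comp_mono hsub2 g₀)
      intro h hh
      obtain ⟨hg₀2, hh2, hr⟩ := S.connIn_iff.1 hh
      clear hh2 hh
      induction hr with
      | refl => exact S.mem_comp_self hg₀T
      | tail hr hstep ih =>
        rename_i b c
        have hbK : b ∈ K := ih
        have hcT : c ∈ Tᶜ := by
          intro hcT
          exact hstep.2.2 ⟨hcT, b, hbK, S.adj_symm hstep.1⟩
        exact S.mem_comp_of_adj hbK hstep.1 hcT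
    -- T2 is nonempty
    have hT2ne : T2.Nonempty := by
      by_contra hcon
      rw [Set.not_nonempty_iff_eq_empty] at hcon
      have : z ∈ S.comp T2ᶜ g₀ := S.connIn_iff.2
        ⟨by simp [hcon], by simp [hcon],
         Relation.ReflTransGen.mono (fun a b h => ⟨h, by simp [hcon], by simp [hcon]⟩)
          _ _ (S.reachable g₀ z)⟩
      rw [hKT2] at this
      exact hzK this
    -- the closest cut point x
    obtain ⟨x, hxF, hxmin⟩ := Finset.exists_min_image hT2fin.toFinset (S.dist z)
      (by rwa [← Set.Finite.toFinset_nonempty hT2fin] at hT2ne)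
    have hxT2 : x ∈ T2 := hT2fin.mem_toFinset.1 hxF
    set d := S.dist z x with hd
    obtain ⟨k, hkK, hadjxk⟩ := hxT2.2
    -- d ≥ R
    have hdR : R ≤ d := by
      have hkball : k ∉ S.ball z R := fun hmem => hz k hmem hkK
      have h1 : ¬ (S.dist z k ≤ R) := hkball
      have h2 : S.dist z k ≤ S.dist z x + S.dist x k := S.dist_triangle z x k
      have h3 : S.dist x k ≤ 1 := S.dist_le_one_of_adj hadjxk
      omega
    have hd1 : 1 ≤ d := le_trans (by omega) hdR
    -- geodesic from z to x
    obtain ⟨w, hwmem, hwlen, hwprod⟩ := S.dist_spec z x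
    have hwd : w.length = d := by rw [hwlen, ← hd]
    set v : ℕ → G := fun j => z * (w.take j).prod with hv
    have hv0 : v 0 = z := by simp [hv]
    have hvd : v d = x := by
      have : w.take d = w := by rw [← hwd]; exact List.take_length
      rw [hv]; simp only [this]; exact hwprod
    have hdistle : ∀ j, j ≤ d → S.dist z (v j) ≤ j := by
      intro j hj
      have := S.dist_le (g := z) (h := v j) (w := w.take j)
        (fun a ha => hwmem a (List.take_subset j w ha)) rfl
      rwa [List.length_take, min_eq_left (by omega : j ≤ w.length)] at this
    have hdistge : ∀ j, j ≤ d → j ≤ S.dist z (v j) := by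
      intro j hj
      have hdrop : S.dist (v j) x ≤ d - j := by
        have hp : v j * (w.drop j).prod = x := by
          rw [hv]
          simp only []
          rw [mul_assoc, ← List.prod_append, List.take_append_drop]
          exact hwprod
        have := S.dist_le (fun a ha => hwmem a (List.drop_subset j w ha)) hp
        rwa [List.length_drop, hwd] at this
      have htri : d ≤ S.dist z (v j) + S.dist (v j) x := S.dist_triangle z (v j) x
      omega
    have hdistv : ∀ j, j ≤ d → S.dist z (v j) = j :=
      fun j hj => le_antisymm (hdistle j hj) (hdistge j hj)
    have hadjv : ∀ j, j < d → S.adj (v j) (v (j+1)) := by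
      intro j hj
      have hjlen : j < w.length := by omega
      have hts : (w.take (j+1)).prod = (w.take j).prod * w.get ⟨j, hjlen⟩ :=
        List.prod_take_succ w j hjlen
      show (v j)⁻¹ * v (j+1) ∈ S.carrier
      have : (v j)⁻¹ * v (j+1) = w.get ⟨j, hjlen⟩ := by
        rw [hv]
        simp only []
        rw [hts, mul_inv_rev, mul_assoc]
        group
      rw [this]
      exact hwmem _ (List.get_mem w ⟨j, hjlen⟩)
    have hvnotT2 : ∀ j, j < d → v j ∉ T2 := by
      intro j hj hmem
      have := hxmin (v j) (hT2fin.mem_toFinset.2 hmem)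
      rw [hdistv j (le_of_lt hj)] at this
      omega
    have hzT2 : z ∈ T2ᶜ := by
      have := hvnotT2 0 (by omega)
      rwa [hv0] at this
    set D := S.comp T2ᶜ z with hD
    have hvD : ∀ j, j < d → v j ∈ D := by
      intro j
      induction j with
      | zero => intro _; rw [hv0]; exact S.mem_comp_self hzT2
      | succ n ih =>
        intro hn
        have hnd : n < d := by omega
        exact S.mem_comp_of_adj (ih hnd) (hadjv n hnd) (hvnotT2 (n+1) hn)
    -- D is finite
    have hDfin : D.Finite := by
      rw [← Set.not_infinite]
      intro hDinf
      have heq := S.unique_infinite_comp hone hT2fin hDinf (by rw [hKT2]; exact hKinf)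
      rw [hKT2] at heq
      have : z ∈ K := by rw [← heq]; exact S.mem_comp_self hzT2
      exact hzK this
    -- assemble, translating by x⁻¹
    have hq'D : v (d-1) ∈ D := hvD (d-1) (by omega)
    have hadjq'x : S.adj (v (d-1)) x := by
      have := hadjv (d-1) (by omega)
      rwa [show d - 1 + 1 = d by omega, hvd] at this
    have himgc : ((x⁻¹ * ·) '' (T2ᶜ)) = ((x⁻¹ * ·) '' T2)ᶜ :=
      Set.image_compl_eq (Group.mulLeft_bijective x⁻¹)
    have hcompq : S.comp ((x⁻¹ * ·) '' T2)ᶜ (x⁻¹ * v (d-1)) = (x⁻¹ * ·) '' (S.comp T2ᶜ (v (d-1))) := by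
      rw [← himgc]; exact S.comp_translate (T2ᶜ) (v (d-1)) x⁻¹
    have hcompu : S.comp ((x⁻¹ * ·) '' T2)ᶜ (x⁻¹ * k) = (x⁻¹ * ·) '' (S.comp T2ᶜ k) := by
      rw [← himgc]; exact S.comp_translate (T2ᶜ) k x⁻¹
    have hcompq' : S.comp T2ᶜ (v (d-1)) = D := (S.comp_eq_of_mem hq'D).symm
    have hcompk : S.comp T2ᶜ k = S.comp T2ᶜ g₀ := (S.comp_eq_of_mem (by rw [hKT2]; exact hkK)).symm
    refine ⟨(x⁻¹ * ·) '' T2, x⁻¹ * v (d-1), x⁻¹ * k, x⁻¹ * z, hT2fin.image _, ?_, ?_, ?_, ?_, ?_, ?_, ?_⟩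
    · rw [Set.ncard_image_of_injective T2 (mul_right_injective x⁻¹)]
      exact hT2card
    · have := S.adj_mul_left x⁻¹ (S.adj_symm hadjq'x)
      simpa using this
    · have := S.adj_mul_left x⁻¹ hadjxk
      simpa using this
    · rw [hcompq, hcompq']
      exact hDfin.image _
    · rw [hcompu, hcompk, hKT2]
      exact hKinf.image (Set.injOn_of_injective (mul_right_injective x⁻¹))
    · rw [hcompq, hcompq']
      exact ⟨z, S.mem_comp_self hzT2, rfl⟩
    · have h1 : S.dist 1 (x⁻¹ * z) = S.dist x z := by
        have := S.dist_mul_left x 1 (x⁻¹ * z)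
        simpa using this.symm
      rw [h1, S.dist_comm]
      omega
  rcases hdi with h | h
  exacts [hmain 1 h, hmain c' h]

/- ################ part 2 : ultrafilter limit of the cuts ################ -/

theorem wide_of_oneEnded' (hone : S.OneEnded) : ¬ S.Narrow := by
  classical
  rintro ⟨i, hnar⟩
  choose C q u a hCfin hCcard hq hu hqfin huinf haq hadist using S.key1 hone hnar
  set 𝒰 : Ultrafilter ℕ := Filter.hyperfilter ℕ with h𝒰
  -- stabilize q and u
  obtain ⟨q0, hq0⟩ : ∃ q0, {r | q r = q0} ∈ 𝒰 := by
    have hcover : (Set.univ : Set ℕ) ⊆ ⋃ y ∈ (S.carrier : Set G), {r | q r = y} := by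
      intro r _
      have : q r ∈ S.carrier := by simpa [adj] using hq r
      exact Set.mem_biUnion this rfl
    have hmem : (⋃ y ∈ (S.carrier : Set G), {r | q r = y}) ∈ 𝒰 :=
      Filter.mem_of_superset Filter.univ_mem hcover
    obtain ⟨y, _, hy⟩ := (Ultrafilter.finite_biUnion_mem_iff S.carrier.finite_toSet).1 hmem
    exact ⟨y, hy⟩
  obtain ⟨u0, hu0⟩ : ∃ u0, {r | u r = u0} ∈ 𝒰 := by
    have hcover : (Set.univ : Set ℕ) ⊆ ⋃ y ∈ (S.carrier : Set G), {r | u r = y} := by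
      intro r _
      have : u r ∈ S.carrier := by simpa [adj] using hu r
      exact Set.mem_biUnion this rfl
    have hmem : (⋃ y ∈ (S.carrier : Set G), {r | u r = y}) ∈ 𝒰 :=
      Filter.mem_of_superset Filter.univ_mem hcover
    obtain ⟨y, _, hy⟩ := (Ultrafilter.finite_biUnion_mem_iff S.carrier.finite_toSet).1 hmem
    exact ⟨y, hy⟩
  -- the limit cut
  set Cinf : Set G := {x | {r | x ∈ C r} ∈ 𝒰} with hCinf
  have hCinfFin : Cinf.Finite := by
    by_contra hinf
    have hinf2 : Cinf.Infinite := hinf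
    obtain ⟨t, htsub, htcard⟩ := hinf2.exists_subset_card_eq (i+1)
    have hint : (⋂ x ∈ t, {r | x ∈ C r}) ∈ 𝒰 :=
      (Filter.biInter_finset_mem t).2 (fun x hx => htsub hx)
    obtain ⟨r, hr⟩ := Filter.nonempty_of_mem hint
    simp only [Set.mem_iInter, Set.mem_setOf_eq] at hr
    have hsub : (↑t : Set G) ⊆ C r := fun x hx => hr x hx
    have : (i+1 : ℕ) ≤ i := by
      calc (i+1 : ℕ) = t.card := htcard.symm
        _ = (↑t : Set G).ncard := (Set.ncard_coe_finset t).symm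
        _ ≤ (C r).ncard := Set.ncard_le_ncard hsub (hCfin r)
        _ ≤ i := hCcard r
    omega
  -- main event
  have hkey : ∀ L : ℕ, ∃ r, L ≤ r ∧ q r = q0 ∧ u r = u0 ∧ Cinf ⊆ C r ∧
      (C r ∩ S.ball 1 L) ⊆ Cinf := by
    intro L
    have e1 : {r | L ≤ r} ∈ 𝒰 := by
      refine Filter.mem_hyperfilter_of_finite_compl ?_
      refine Set.Finite.subset (Set.finite_Iio L) ?_
      intro r hr
      simpa using hr
    have e2 : {r | Cinf ⊆ C r} ∈ 𝒰 := by
      have hint : (⋂ x ∈ hCinfFin.toFinset, {r | x ∈ C r}) ∈ 𝒰 :=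
        (Filter.biInter_finset_mem _).2 (fun x hx => hCinfFin.mem_toFinset.1 hx)
      refine Filter.mem_of_superset hint ?_
      intro r hr
      simp only [Set.mem_iInter, Set.mem_setOf_eq] at hr
      exact fun x hx => hr x (hCinfFin.mem_toFinset.2 hx)
    have e3 : {r | ∀ x ∈ (S.ball 1 L) \ Cinf, x ∉ C r} ∈ 𝒰 := by
      have hBfin : ((S.ball 1 L) \ Cinf).Finite := (S.ball_finite 1 L).diff
      have hint : (⋂ x ∈ hBfin.toFinset, {r | x ∉ C r}) ∈ 𝒰 := by
        refine (Filter.biInter_finset_mem _).2 (fun x hx => ?_)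
        have hxnot : x ∉ Cinf := (hBfin.mem_toFinset.1 hx).2
        exact (Ultrafilter.compl_mem_iff_notMem (s := {r | x ∈ C r})).2 hxnot
      refine Filter.mem_of_superset hint ?_
      intro r hr
      simp only [Set.mem_iInter, Set.mem_setOf_eq] at hr
      exact fun x hx => hr x (hBfin.mem_toFinset.2 hx)
    obtain ⟨r, hr⟩ := Filter.nonempty_of_mem
      (Filter.inter_mem (Filter.inter_mem (Filter.inter_mem (Filter.inter_mem e1 hq0) hu0) e2) e3)
    obtain ⟨⟨⟨⟨he1, heq0⟩, heu0⟩, he2⟩, he3⟩ := hr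
    refine ⟨r, he1, heq0, heu0, he2, ?_⟩
    intro x hx
    by_contra hxinf
    exact he3 x ⟨hx.2, hxinf⟩ hx.1
  -- q0 and u0 avoid the limit cut
  have hq0notC : q0 ∉ Cinf := by
    obtain ⟨r, _, hrq, _, hrC, _⟩ := hkey 0
    have hqr : q r ∈ (C r)ᶜ := (S.connIn_iff.1 (haq r)).1
    rw [hrq] at hqr
    exact fun hmem => hqr (hrC hmem)
  have hu0notC : u0 ∉ Cinf := by
    obtain ⟨r, _, _, hru, hrC, _⟩ := hkey 0
    obtain ⟨y, hy⟩ := (huinf r).nonempty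
    have hur : u r ∈ (C r)ᶜ := (S.connIn_iff.1 hy).1
    rw [hru] at hur
    exact fun hmem => hur (hrC hmem)
  -- the two limit components
  have hAinf : (S.comp Cinfᶜ q0).Infinite := by
    refine S.infinite_of_unbounded (fun L => ?_)
    obtain ⟨r, hLr, hrq, _, hrC, _⟩ := hkey L
    refine ⟨a r, ?_, le_trans hLr (hadist r)⟩
    have hsub : (C r)ᶜ ⊆ Cinfᶜ := Set.compl_subset_compl.2 hrC
    have := S.comp_mono hsub (q r) (haq r)
    rwa [hrq] at this
  have hBinf : (S.comp Cinfᶜ u0).Infinite := by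
    obtain ⟨r, _, _, hru, hrC, _⟩ := hkey 0
    have hsub : (C r)ᶜ ⊆ Cinfᶜ := Set.compl_subset_compl.2 hrC
    refine Set.Infinite.mono ?_ (huinf r)
    rw [← hru]
    exact S.comp_mono hsub (u r)
  -- they coincide by one-endedness
  have hAB := S.unique_infinite_comp hone hCinfFin hAinf hBinf
  -- hence q0 is connected to u0 avoiding Cinf, contradiction
  have hq0B : q0 ∈ S.comp Cinfᶜ u0 := by
    rw [← hAB]
    exact S.mem_comp_self hq0notC
  obtain ⟨l, hl, hchain, hmem, hhead, hlast⟩ := hq0B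
  set L : ℕ := l.toFinset.sup (S.dist 1) with hL
  have hbound : ∀ x ∈ l, S.dist 1 x ≤ L :=
    fun x hx => Finset.le_sup (f := S.dist 1) (List.mem_toFinset.2 hx)
  obtain ⟨r, _, hrq, hru, hrC, hrball⟩ := hkey L
  have hmem' : ∀ x ∈ l, x ∈ (C r)ᶜ := by
    intro x hx
    intro hxC
    exact (hmem x hx) (hrball ⟨hxC, hbound x hx⟩)
  have hconn : q0 ∈ S.comp (C r)ᶜ (u r) := by
    rw [hru]
    exact ⟨l, hl, hchain, hmem', hhead, hlast⟩
  have heqcomp : S.comp (C r)ᶜ (u r) = S.comp (C r)ᶜ (q r) := by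
    rw [hru, hrq]
    exact S.comp_eq_of_mem (by rw [← hru]; exact hconn)
  have : (S.comp (C r)ᶜ (u r)).Finite := by
    rw [heqcomp]
    exact hqfin r
  exact (huinf r) this

end GenSet

/-- Every one-ended finitely generated group is wide, i.e. not narrow. -/
theorem wide_of_oneEnded {G : Type*} [Group G] (S : GenSet G)
    (hone : S.OneEnded) : ¬ S.Narrow :=
  S.wide_of_oneEnded' hone
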